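/- arXiv:math-ph/0602019 — 2 statements merged into one kernel-verified Lean document; each statement's English description precedes it below -/
import Mathlib

section
/- Let f : ℝ² → ℂ be a smooth (infinitely differentiable) function. Then for every natural number k and every r with 0 ≤ r ≤ k, the iterated Wirtinger derivative ∂_z^{k−r} ∂_z̄^r f equals Σ_{q=0}^{k} p^k_{rq} · ∂_x^{k−q} ∂_y^{q} f pointwise on ℝ², where p^k_{rq} is given by the explicit formula below. -/
/-- Partial derivative of a `ℂ`-valued function on `ℝ²` in the direction `v`. -/
noncomputable def pdc (v : ℝ × ℝ) (f : ℝ × ℝ → ℂ) : ℝ × ℝ → ℂ := fun p => fderiv ℝ f p v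

/-- Wirtinger derivative `∂_z f = (1/2)(∂_x f − i ∂_y f)`. -/
noncomputable def wz (f : ℝ × ℝ → ℂ) : ℝ × ℝ → ℂ :=
  fun p => (1 / 2 : ℂ) * (pdc (1, 0) f p - Complex.I * pdc (0, 1) f p)

/-- Wirtinger derivative `∂_z̄ f = (1/2)(∂_x f + i ∂_y f)`. -/
noncomputable def wzb (f : ℝ × ℝ → ℂ) : ℝ × ℝ → ℂ :=
  fun p => (1 / 2 : ℂ) * (pdc (1, 0) f p + Complex.I * pdc (0, 1) f p)

/-- The coefficient `p^k_{rs}` expressing complex jet variables via real ones: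
`p^k_{rs} = (−1)^(k−r) (r!(k−r)!)/(2^k s!(k−s)!) i^s
  Σ_{α=max(0,k−r−s)}^{min(k−r,k−s)} (−1)^α C(k−s,α) C(s,k−r−α)`. -/
noncomputable def pcoef (k r s : ℕ) : ℂ :=
  (-1) ^ (k - r) *
    ((r.factorial * (k - r).factorial : ℂ) / ((2 : ℂ) ^ k * (s.factorial * (k - s).factorial))) *
    Complex.I ^ s *
    ∑ α ∈ Finset.Icc (k - r - s) (min (k - r) (k - s)),
      (-1) ^ α * ((k - s).choose α : ℂ) * ((s.choose (k - r - α)) : ℂ)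

/-! ### Combinatorial part -/

noncomputable def Tsum (m r q : ℕ) : ℂ :=
  ∑ β ∈ Finset.range (q + 1), (-1) ^ β * (m.choose β : ℂ) * (r.choose (q - β) : ℂ)

noncomputable def ccoef (k r q : ℕ) : ℂ :=
  Complex.I ^ q / 2 ^ k * Tsum (k - r) r q

lemma Tsum_zero (m r : ℕ) : Tsum m r 0 = 1 := by simp [Tsum]

lemma Tsum_top {m r q : ℕ} (h : m + r < q) : Tsum m r q = 0 := by
  apply Finset.sum_eq_zero
  intro β hβ
  rcases le_or_gt β m with h1 | h1
  · have : r < q - β := by omega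
    simp [Nat.choose_eq_zero_of_lt this]
  · simp [Nat.choose_eq_zero_of_lt h1]

lemma Tsum_succ_right (m r q : ℕ) : Tsum m (r + 1) (q + 1) = Tsum m r (q + 1) + Tsum m r q := by
  unfold Tsum
  rw [Finset.sum_range_succ, Finset.sum_range_succ
    (fun β => (-1 : ℂ) ^ β * (m.choose β : ℂ) * (r.choose (q + 1 - β) : ℂ))]
  have key : ∀ β ∈ Finset.range (q + 1),
      (-1 : ℂ) ^ β * (m.choose β : ℂ) * ((r + 1).choose (q + 1 - β) : ℂ)
        = ((-1 : ℂ) ^ β * (m.choose β : ℂ) * (r.choose (q + 1 - β) : ℂ))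
          + ((-1 : ℂ) ^ β * (m.choose β : ℂ) * (r.choose (q - β) : ℂ)) := by
    intro β hβ
    have hβq : β ≤ q := by simpa using Nat.lt_succ_iff.mp (Finset.mem_range.mp hβ)
    have h1 : q + 1 - β = (q - β) + 1 := by omega
    rw [h1, Nat.choose_succ_succ']
    push_cast
    ring
  rw [Finset.sum_congr rfl key, Finset.sum_add_distrib]
  simp
  ring

lemma Tsum_succ_left (m r q : ℕ) : Tsum (m + 1) r (q + 1) = Tsum m r (q + 1) - Tsum m r q := by
  unfold Tsum
  rw [Finset.sum_range_succ' (fun β => (-1 : ℂ) ^ β * ((m + 1).choose β : ℂ) * (r.choose (q + 1 - β) : ℂ)),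
      Finset.sum_range_succ' (fun β => (-1 : ℂ) ^ β * (m.choose β : ℂ) * (r.choose (q + 1 - β) : ℂ))]
  have key : ∀ β ∈ Finset.range (q + 1),
      (-1 : ℂ) ^ (β + 1) * ((m + 1).choose (β + 1) : ℂ) * (r.choose (q + 1 - (β + 1)) : ℂ)
        = ((-1 : ℂ) ^ (β + 1) * (m.choose (β + 1) : ℂ) * (r.choose (q + 1 - (β + 1)) : ℂ))
          - ((-1 : ℂ) ^ β * (m.choose β : ℂ) * (r.choose (q - β) : ℂ)) := by
    intro β hβ
    have h1 : q + 1 - (β + 1) = q - β := by omega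
    rw [h1, Nat.choose_succ_succ]
    push_cast
    ring
  rw [Finset.sum_congr rfl key, Finset.sum_sub_distrib]
  simp
  ring

lemma ccoef_zero' (k r : ℕ) : ccoef k r 0 = 1 / 2 ^ k := by
  simp [ccoef, Tsum_zero]

lemma ccoef_top {k r q : ℕ} (hr : r ≤ k) (hq : k < q) : ccoef k r q = 0 := by
  rw [ccoef, Tsum_top (by omega), mul_zero]

lemma ccoef_rec_wzb (k r q : ℕ) :
    ccoef (k + 1) (r + 1) (q + 1)
      = (1 / 2 : ℂ) * ccoef k r (q + 1) + (Complex.I / 2) * ccoef k r q := by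
  unfold ccoef
  rw [Nat.succ_sub_succ, Tsum_succ_right, pow_succ (2 : ℂ) k, pow_succ Complex.I q]
  have h2 : ((2 : ℂ) ^ k) ≠ 0 := pow_ne_zero _ two_ne_zero
  field_simp

lemma ccoef_rec_wz (k r q : ℕ) (hr : r ≤ k) :
    ccoef (k + 1) r (q + 1)
      = (1 / 2 : ℂ) * ccoef k r (q + 1) - (Complex.I / 2) * ccoef k r q := by
  unfold ccoef
  rw [show k + 1 - r = (k - r) + 1 from by omega, Tsum_succ_left,
    pow_succ (2 : ℂ) k, pow_succ Complex.I q]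
  have h2 : ((2 : ℂ) ^ k) ≠ 0 := pow_ne_zero _ two_ne_zero
  field_simp

lemma ccoef_rec0 (k r r' : ℕ) : ccoef (k + 1) r' 0 = (1 / 2 : ℂ) * ccoef k r 0 := by
  rw [ccoef_zero', ccoef_zero', pow_succ]
  ring

lemma pcoef_eq_ccoef {k r q : ℕ} (hr : r ≤ k) (hq : q ≤ k) : pcoef k r q = ccoef k r q := by
  set m := k - r with hm
  unfold pcoef ccoef
  have h1 : (∑ α ∈ Finset.Icc (m - q) (min m (k - q)),
        (-1 : ℂ) ^ α * ((k - q).choose α : ℂ) * ((q.choose (m - α)) : ℂ))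
      = ∑ α ∈ Finset.range (m + 1),
        (-1 : ℂ) ^ α * ((k - q).choose α : ℂ) * ((q.choose (m - α)) : ℂ) := by
    apply Finset.sum_subset
    · intro α hα
      rw [Finset.mem_Icc] at hα
      rw [Finset.mem_range]
      omega
    · intro α hα hα'
      rw [Finset.mem_range] at hα
      rw [Finset.mem_Icc] at hα'
      rcases lt_or_ge α (m - q) with h2 | h2
      · have : q < m - α := by omega
        simp [Nat.choose_eq_zero_of_lt this]
      · have : k - q < α := by omega
        simp [Nat.choose_eq_zero_of_lt this]
  rw [h1, ← Finset.sum_range_reflect]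
  simp only [Nat.add_sub_cancel]
  unfold Tsum
  have key : ∑ β ∈ Finset.range (m + 1),
        ((-1 : ℂ) ^ m * ((r.factorial * m.factorial : ℂ) / ((q.factorial * (k - q).factorial))) *
          ((-1 : ℂ) ^ (m - β) * ((k - q).choose (m - β) : ℂ) * ((q.choose (m - (m - β))) : ℂ)))
      = ∑ β ∈ Finset.range (q + 1),
          (-1 : ℂ) ^ β * (m.choose β : ℂ) * (r.choose (q - β) : ℂ) := by
    have hsub1 : Finset.range (min m q + 1) ⊆ Finset.range (m + 1) := by
      apply Finset.range_subset_range.mpr; omega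
    have hsub2 : Finset.range (min m q + 1) ⊆ Finset.range (q + 1) := by
      apply Finset.range_subset_range.mpr; omega
    rw [← Finset.sum_subset hsub1, ← Finset.sum_subset hsub2]
    · apply Finset.sum_congr rfl
      intro β hβ
      rw [Finset.mem_range] at hβ
      have hβm : β ≤ m := by omega
      have hβq : β ≤ q := by omega
      have e1 : m - (m - β) = β := by omega
      rw [e1]
      have hsign : (-1 : ℂ) ^ m * (-1 : ℂ) ^ (m - β) = (-1 : ℂ) ^ β := by
        rw [← pow_add]
        have : m + (m - β) = 2 * (m - β) + β := by omega
        rw [this, pow_add, pow_mul, neg_one_sq, one_pow, one_mul]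
      by_cases hcase : q - β ≤ r
      · have h2 : m - β ≤ k - q := by omega
        have e2 : (k - q) - (m - β) = r - (q - β) := by omega
        rw [Nat.cast_choose ℂ h2, Nat.cast_choose ℂ hβq, Nat.cast_choose ℂ hβm,
          Nat.cast_choose ℂ hcase, e2]
        have f1 : (q.factorial : ℂ) ≠ 0 := Nat.cast_ne_zero.mpr q.factorial_ne_zero
        have f2 : ((k - q).factorial : ℂ) ≠ 0 := Nat.cast_ne_zero.mpr (k - q).factorial_ne_zero
        have f3 : ((m - β).factorial : ℂ) ≠ 0 := Nat.cast_ne_zero.mpr (m - β).factorial_ne_zero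
        have f4 : ((r - (q - β)).factorial : ℂ) ≠ 0 :=
          Nat.cast_ne_zero.mpr (r - (q - β)).factorial_ne_zero
        have f5 : (β.factorial : ℂ) ≠ 0 := Nat.cast_ne_zero.mpr β.factorial_ne_zero
        have f6 : ((q - β).factorial : ℂ) ≠ 0 := Nat.cast_ne_zero.mpr (q - β).factorial_ne_zero
        field_simp
        rw [← hsign]
        ring
      · have h2 : k - q < m - β := by omega
        have h3 : r < q - β := by omega
        simp [Nat.choose_eq_zero_of_lt h2, Nat.choose_eq_zero_of_lt h3]
    · intro β hβ hβ'
      rw [Finset.mem_range] at hβ hβ'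
      have : m < β := by omega
      simp [Nat.choose_eq_zero_of_lt this]
    · intro β hβ hβ'
      rw [Finset.mem_range] at hβ hβ'
      have : q < m - (m - β) := by omega
      simp [Nat.choose_eq_zero_of_lt this]
  rw [← key, Finset.mul_sum, Finset.mul_sum]
  apply Finset.sum_congr rfl
  intro β hβ
  have h2 : ((2 : ℂ) ^ k) ≠ 0 := pow_ne_zero _ two_ne_zero
  field_simp
  ring

lemma sum_step (n : ℕ) (c c' : ℕ → ℂ) (F : ℕ → ℂ) (w : ℂ)
    (h0 : c' 0 = (1 / 2 : ℂ) * c 0)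
    (hs : ∀ q, c' (q + 1) = (1 / 2 : ℂ) * c (q + 1) + w * c q)
    (htop : c (n + 1) = 0) :
    ∑ q ∈ Finset.range (n + 2), c' q * F q
      = (1 / 2 : ℂ) * ∑ q ∈ Finset.range (n + 1), c q * F q
        + w * ∑ q ∈ Finset.range (n + 1), c q * F (q + 1) := by
  have hA : ∑ q ∈ Finset.range (n + 2), c q * F q
      = ∑ q ∈ Finset.range (n + 1), c q * F q := by
    rw [Finset.sum_range_succ, htop, zero_mul, add_zero]
  rw [Finset.sum_range_succ' (fun q => c' q * F q), h0]
  have hs' : ∀ q ∈ Finset.range (n + 1), c' (q + 1) * F (q + 1)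
      = (1 / 2 : ℂ) * (c (q + 1) * F (q + 1)) + w * (c q * F (q + 1)) := by
    intro q _; rw [hs]; ring
  rw [Finset.sum_congr rfl hs']
  rw [Finset.sum_add_distrib, ← Finset.mul_sum, ← Finset.mul_sum]
  have hB := Finset.sum_range_succ' (fun q => c q * F q) (n + 1)
  rw [hA] at hB
  linear_combination (-(1 / 2) : ℂ) * hB

/-! ### Analytic part -/

lemma contDiff_pdc (v : ℝ × ℝ) {f : ℝ × ℝ → ℂ} (hf : ContDiff ℝ (⊤ : ℕ∞) f) :
    ContDiff ℝ (⊤ : ℕ∞) (pdc v f) :=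
  (hf.fderiv_right (by simp)).clm_apply contDiff_const

lemma pdc_comm {f : ℝ × ℝ → ℂ} (hf : ContDiff ℝ (⊤ : ℕ∞) f) (v w : ℝ × ℝ) :
    pdc v (pdc w f) = pdc w (pdc v f) := by
  funext p
  have hd : Differentiable ℝ f := hf.differentiable (by simp)
  have h2 : DifferentiableAt ℝ (fderiv ℝ f) p :=
    ((hf.fderiv_right (m := (⊤ : ℕ∞)) (by simp)).differentiable (by simp)) p
  have hsym := second_derivative_symmetric (f := f) (f' := fderiv ℝ f)
    (f'' := fderiv ℝ (fderiv ℝ f) p) (fun y => (hd y).hasFDerivAt) h2.hasFDerivAt v w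
  show fderiv ℝ (fun x => (fderiv ℝ f x) w) p v = fderiv ℝ (fun x => (fderiv ℝ f x) v) p w
  rw [fderiv_clm_apply h2 (differentiableAt_const w),
      fderiv_clm_apply h2 (differentiableAt_const v)]
  simp [hsym]

lemma pdc_sum {ι : Type*} (s : Finset ι) (g : ι → (ℝ × ℝ) → ℂ)
    (hg : ∀ i ∈ s, Differentiable ℝ (g i)) (v : ℝ × ℝ) :
    pdc v (fun p => ∑ i ∈ s, g i p) = fun p => ∑ i ∈ s, pdc v (g i) p := by
  funext p
  show fderiv ℝ (fun p => ∑ i ∈ s, g i p) p v = _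
  rw [fderiv_fun_sum (fun i hi => (hg i hi) p)]
  simp [pdc]

lemma pdc_const_mul (c : ℂ) {g : ℝ × ℝ → ℂ} (hg : Differentiable ℝ g) (v : ℝ × ℝ) :
    pdc v (fun p => c * g p) = fun p => c * pdc v g p := by
  funext p
  show fderiv ℝ (fun p => c * g p) p v = _
  rw [fderiv_const_mul (hg p) c]
  simp [pdc]

noncomputable def D2 (a b : ℕ) (f : ℝ × ℝ → ℂ) : ℝ × ℝ → ℂ :=
  (pdc (1, 0))^[a] ((pdc (0, 1))^[b] f)

lemma contDiff_pdc_iter (v : ℝ × ℝ) (n : ℕ) {f : ℝ × ℝ → ℂ} (hf : ContDiff ℝ (⊤ : ℕ∞) f) :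
    ContDiff ℝ (⊤ : ℕ∞) ((pdc v)^[n] f) := by
  induction n with
  | zero => exact hf
  | succ n ih => rw [Function.iterate_succ_apply']; exact contDiff_pdc v ih

lemma contDiff_D2 (a b : ℕ) {f : ℝ × ℝ → ℂ} (hf : ContDiff ℝ (⊤ : ℕ∞) f) :
    ContDiff ℝ (⊤ : ℕ∞) (D2 a b f) :=
  contDiff_pdc_iter _ a (contDiff_pdc_iter _ b hf)

lemma Dx_D2 (a b : ℕ) (f : ℝ × ℝ → ℂ) : pdc (1, 0) (D2 a b f) = D2 (a + 1) b f :=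
  (Function.iterate_succ_apply' (pdc (1, 0)) a _).symm

lemma Dy_D2 (a b : ℕ) {f : ℝ × ℝ → ℂ} (hf : ContDiff ℝ (⊤ : ℕ∞) f) :
    pdc (0, 1) (D2 a b f) = D2 a (b + 1) f := by
  induction a with
  | zero =>
    show pdc (0, 1) ((pdc (0, 1))^[b] f) = (pdc (0, 1))^[b + 1] f
    rw [Function.iterate_succ_apply']
  | succ a ih =>
    have h1 : D2 (a + 1) b f = pdc (1, 0) (D2 a b f) :=
      Function.iterate_succ_apply' (pdc (1, 0)) a _
    rw [h1, pdc_comm (contDiff_D2 a b hf) (0, 1) (1, 0), ih,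
      show pdc (1, 0) (D2 a (b + 1) f) = D2 (a + 1) (b + 1) f from Dx_D2 a (b + 1) f]

lemma pdc_expand (v : ℝ × ℝ) (n : ℕ) (d : ℕ → ℂ) {f : ℝ × ℝ → ℂ} (hf : ContDiff ℝ (⊤ : ℕ∞) f) :
    pdc v (fun p => ∑ q ∈ Finset.range (n + 1), d q * D2 (n - q) q f p)
      = fun p => ∑ q ∈ Finset.range (n + 1), d q * pdc v (D2 (n - q) q f) p := by
  rw [pdc_sum (Finset.range (n + 1)) (fun q => fun p => d q * D2 (n - q) q f p)
    (fun q _ => ((contDiff_D2 (n - q) q hf).differentiable (by simp)).const_mul (d q)) v]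
  funext p
  apply Finset.sum_congr rfl
  intro q _
  rw [pdc_const_mul (d q) ((contDiff_D2 (n - q) q hf).differentiable (by simp)) v]

lemma expandX {f : ℝ × ℝ → ℂ} (hf : ContDiff ℝ (⊤ : ℕ∞) f) (n : ℕ) (d : ℕ → ℂ) (p : ℝ × ℝ) :
    pdc (1, 0) (fun p => ∑ q ∈ Finset.range (n + 1), d q * D2 (n - q) q f p) p
      = ∑ q ∈ Finset.range (n + 1), d q * D2 (n + 1 - q) q f p := by
  rw [pdc_expand (1, 0) n d hf]
  simp only [Dx_D2]
  apply Finset.sum_congr rfl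
  intro q hq
  rw [Finset.mem_range] at hq
  rw [show n - q + 1 = n + 1 - q from by omega]

lemma expandY {f : ℝ × ℝ → ℂ} (hf : ContDiff ℝ (⊤ : ℕ∞) f) (n : ℕ) (d : ℕ → ℂ) (p : ℝ × ℝ) :
    pdc (0, 1) (fun p => ∑ q ∈ Finset.range (n + 1), d q * D2 (n - q) q f p) p
      = ∑ q ∈ Finset.range (n + 1), d q * D2 (n + 1 - (q + 1)) (q + 1) f p := by
  rw [pdc_expand (0, 1) n d hf]
  have hDy : ∀ a b : ℕ, pdc (0, 1) (D2 a b f) = D2 a (b + 1) f := fun a b => Dy_D2 a b hf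
  simp only [hDy, Nat.succ_sub_succ]

lemma wzb_iter {f : ℝ × ℝ → ℂ} (hf : ContDiff ℝ (⊤ : ℕ∞) f) (r : ℕ) :
    wzb^[r] f = fun p => ∑ q ∈ Finset.range (r + 1), ccoef r r q * D2 (r - q) q f p := by
  induction r with
  | zero =>
    funext p
    simp [D2, ccoef_zero']
  | succ r ih =>
    rw [Function.iterate_succ_apply', ih]
    funext p
    simp only [wzb]
    rw [expandX hf r (ccoef r r) p, expandY hf r (ccoef r r) p,
      sum_step r (ccoef r r) (ccoef (r + 1) (r + 1))
        (fun q => D2 (r + 1 - q) q f p) (Complex.I / 2)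
        (ccoef_rec0 r r (r + 1)) (fun q => ccoef_rec_wzb r r q)
        (ccoef_top le_rfl (Nat.lt_succ_self r))]
    ring

lemma wz_iter {f : ℝ × ℝ → ℂ} (hf : ContDiff ℝ (⊤ : ℕ∞) f) (r j : ℕ) :
    wz^[j] (wzb^[r] f)
      = fun p => ∑ q ∈ Finset.range (r + j + 1), ccoef (r + j) r q * D2 (r + j - q) q f p := by
  induction j with
  | zero => simpa using wzb_iter hf r
  | succ j ih =>
    rw [Function.iterate_succ_apply', ih]
    funext p
    simp only [wz]
    have hs : ∀ q, ccoef (r + j + 1) r (q + 1)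
        = (1 / 2 : ℂ) * ccoef (r + j) r (q + 1) + (-(Complex.I / 2)) * ccoef (r + j) r q := by
      intro q
      rw [ccoef_rec_wz (r + j) r q (by omega)]
      ring
    rw [expandX hf (r + j) (ccoef (r + j) r) p, expandY hf (r + j) (ccoef (r + j) r) p,
      show r + (j + 1) = (r + j) + 1 from by omega,
      sum_step (r + j) (ccoef (r + j) r) (ccoef (r + j + 1) r)
        (fun q => D2 (r + j + 1 - q) q f p) (-(Complex.I / 2))
        (ccoef_rec0 (r + j) r r) hs
        (ccoef_top (by omega) (Nat.lt_succ_self (r + j)))]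
    ring

/-- `∂_z^(k−r) ∂_z̄^r f = Σ_{q=0}^{k} p^k_{rq} ∂_x^(k−q) ∂_y^q f` pointwise. -/
theorem wirtinger_eq_sum_real_partials (f : ℝ × ℝ → ℂ) (hf : ContDiff ℝ (⊤ : ℕ∞) f)
    (k r : ℕ) (hr : r ≤ k) (a : ℝ × ℝ) :
    (wz^[k - r] (wzb^[r] f)) a =
      ∑ q ∈ Finset.range (k + 1),
        pcoef k r q * ((pdc (1, 0))^[k - q] ((pdc (0, 1))^[q] f) a) := by
  have h := wz_iter hf r (k - r)
  rw [show r + (k - r) = k from by omega] at h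
  rw [h]
  apply Finset.sum_congr rfl
  intro q hq
  rw [Finset.mem_range] at hq
  rw [pcoef_eq_ccoef hr (by omega)]
  rfl
end

section
/- Let U ⊆ ℝ² be open and let μ, μ̃ : U → ℝ be smooth functions satisfying the Cauchy–Riemann relations ∂_{x₁}μ = ∂_{x₂}μ̃ and ∂_{x₂}μ = −∂_{x₁}μ̃ on U (so μ is harmonic and μ̃ is a harmonic conjugate of μ). Let k : ℝ² → ℝ be a smooth function such that for every p ∈ U, μ(p)·(∂₁∂₁k + ∂₂∂₂k)(μ(p), μ̃(p)) + (∂₁k)(μ(p), μ̃(p)) = 0, where ∂₁, ∂₂ denote partial derivatives with respect to the first and second argument. Then the composite h := k ∘ (μ, μ̃) : U → ℝ satisfies μ·(∂_{x₁}∂_{x₁}h + ∂_{x₂}∂_{x₂}h) + (∂_{x₁}μ)·(∂_{x₁}h) + (∂_{x₂}μ)·(∂_{x₂}h) = 0 at every point of U (which, wherever μ ≠ 0, is the equation Δh + ∂_{x₁}(ln|μ|)·∂_{x₁}h + ∂_{x₂}(ln|μ|)·∂_{x₂}h = 0). -/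
/-- Partial derivative of a real-valued function on `ℝ²` in the direction `v`. -/
noncomputable def pdv (v : ℝ × ℝ) (f : ℝ × ℝ → ℝ) : ℝ × ℝ → ℝ := fun p => fderiv ℝ f p v

/-- Partial derivative with respect to the first coordinate. -/
noncomputable def px : (ℝ × ℝ → ℝ) → ℝ × ℝ → ℝ := pdv (1, 0)

/-- Partial derivative with respect to the second coordinate. -/
noncomputable def py : (ℝ × ℝ → ℝ) → ℝ × ℝ → ℝ := pdv (0, 1)

open Filter Topology

lemma pdv_congr {f g : ℝ × ℝ → ℝ} {p : ℝ × ℝ} (h : f =ᶠ[𝓝 p] g) (v : ℝ × ℝ) :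
    pdv v f p = pdv v g p := by
  unfold pdv; rw [h.fderiv_eq]

lemma contDiffAt_pdv {f : ℝ × ℝ → ℝ} {p : ℝ × ℝ} (hf : ContDiffAt ℝ (⊤ : ℕ∞) f p) (v : ℝ × ℝ) :
    ContDiffAt ℝ (⊤ : ℕ∞) (pdv v f) p :=
  (hf.fderiv_right (by simp)).clm_apply contDiffAt_const

lemma pdv_mul {f g : ℝ × ℝ → ℝ} {p : ℝ × ℝ} (hf : DifferentiableAt ℝ f p)
    (hg : DifferentiableAt ℝ g p) (v : ℝ × ℝ) :
    pdv v (fun q => f q * g q) p = pdv v f p * g p + f p * pdv v g p := by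
  unfold pdv
  rw [fderiv_fun_mul hf hg]
  simp only [ContinuousLinearMap.add_apply, ContinuousLinearMap.smul_apply, smul_eq_mul]
  ring

lemma pdv_add {f g : ℝ × ℝ → ℝ} {p : ℝ × ℝ} (hf : DifferentiableAt ℝ f p)
    (hg : DifferentiableAt ℝ g p) (v : ℝ × ℝ) :
    pdv v (fun q => f q + g q) p = pdv v f p + pdv v g p := by
  unfold pdv
  rw [fderiv_fun_add hf hg]; simp

lemma pdv_neg {f : ℝ × ℝ → ℝ} {p : ℝ × ℝ} (v : ℝ × ℝ) :
    pdv v (fun q => -(f q)) p = -(pdv v f p) := by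
  unfold pdv
  rw [fderiv_fun_neg]; simp

lemma fderiv_decomp (f : ℝ × ℝ → ℝ) (x w : ℝ × ℝ) :
    fderiv ℝ f x w = w.1 * pdv (1,0) f x + w.2 * pdv (0,1) f x := by
  have hw : w = w.1 • ((1:ℝ),(0:ℝ)) + w.2 • ((0:ℝ),(1:ℝ)) := by
    ext <;> simp
  unfold pdv
  conv_lhs => rw [hw]
  rw [map_add, map_smul, map_smul, smul_eq_mul, smul_eq_mul]

lemma pdv_comp {k μ μt : ℝ × ℝ → ℝ} {p : ℝ × ℝ} (hk : ContDiff ℝ (⊤ : ℕ∞) k)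
    (hμ : ContDiffAt ℝ (⊤ : ℕ∞) μ p) (hμt : ContDiffAt ℝ (⊤ : ℕ∞) μt p) (v : ℝ × ℝ) :
    pdv v (fun q => k (μ q, μt q)) p
      = fderiv ℝ k (μ p, μt p) (pdv v μ p, pdv v μt p) := by
  have h1 := (hμ.differentiableAt (by simp)).hasFDerivAt
  have h2 := (hμt.differentiableAt (by simp)).hasFDerivAt
  have hΦ := h1.prodMk h2
  have hK := (hk.differentiable (by simp) (μ p, μt p)).hasFDerivAt
  have hc := hK.comp p hΦ
  have he : (fun q => k (μ q, μt q)) = k ∘ fun q => (μ q, μt q) := rfl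
  show fderiv ℝ (fun q => k (μ q, μt q)) p v = _
  rw [he, hc.fderiv]
  rfl

lemma pdv_pdv {f : ℝ × ℝ → ℝ} {p : ℝ × ℝ} (hf : ContDiffAt ℝ (⊤ : ℕ∞) f p) (v w : ℝ × ℝ) :
    pdv v (pdv w f) p = fderiv ℝ (fderiv ℝ f) p v w := by
  have hd : DifferentiableAt ℝ (fderiv ℝ f) p :=
    (hf.fderiv_right (m := 1) (WithTop.coe_le_coe.mpr le_top)).differentiableAt one_ne_zero
  unfold pdv
  rw [fderiv_clm_apply hd (differentiableAt_const w)]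
  simp

lemma pdv_comm {f : ℝ × ℝ → ℝ} {p : ℝ × ℝ} (hf : ContDiffAt ℝ (⊤ : ℕ∞) f p) (v w : ℝ × ℝ) :
    pdv v (pdv w f) p = pdv w (pdv v f) p := by
  rw [pdv_pdv hf, pdv_pdv hf]
  exact hf.isSymmSndFDerivAt
    (by rw [minSmoothness_of_isRCLikeNormedField]; exact WithTop.coe_le_coe.mpr le_top) v w

/-- If `μ, μ̃` satisfy the Cauchy–Riemann relations on an open set `U` and `k` satisfies
`μ·(k₁₁ + k₂₂)∘(μ,μ̃) + k₁∘(μ,μ̃) = 0` on `U`, then `h := k ∘ (μ,μ̃)` satisfies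
`μ·(h_{x₁x₁} + h_{x₂x₂}) + μ_{x₁}·h_{x₁} + μ_{x₂}·h_{x₂} = 0` on `U`. -/
theorem harmonic_conjugate_substitution (U : Set (ℝ × ℝ)) (hU : IsOpen U)
    (μ μt : ℝ × ℝ → ℝ) (hμ : ContDiffOn ℝ (⊤ : ℕ∞) μ U) (hμt : ContDiffOn ℝ (⊤ : ℕ∞) μt U)
    (hCR1 : ∀ p ∈ U, px μ p = py μt p) (hCR2 : ∀ p ∈ U, py μ p = -px μt p)
    (k : ℝ × ℝ → ℝ) (hk : ContDiff ℝ (⊤ : ℕ∞) k)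
    (hkeq : ∀ p ∈ U,
      μ p * (px (px k) (μ p, μt p) + py (py k) (μ p, μt p)) + px k (μ p, μt p) = 0) :
    ∀ p ∈ U,
      μ p * (px (px (fun q => k (μ q, μt q))) p + py (py (fun q => k (μ q, μt q))) p) +
          px μ p * px (fun q => k (μ q, μt q)) p +
          py μ p * py (fun q => k (μ q, μt q)) p = 0 := by
  simp only [px, py] at hCR1 hCR2 hkeq ⊢
  intro p hp
  have hUp : U ∈ 𝓝 p := hU.mem_nhds hp
  have hμp : ContDiffAt ℝ (⊤ : ℕ∞) μ p := hμ.contDiffAt hUp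
  have hμtp : ContDiffAt ℝ (⊤ : ℕ∞) μt p := hμt.contDiffAt hUp
  have hKv : ∀ v : ℝ × ℝ, ContDiff ℝ (⊤ : ℕ∞) (pdv v k) :=
    fun v => (hk.fderiv_right (by simp)).clm_apply contDiff_const
  have key1 : ∀ v : ℝ × ℝ, ∀ q ∈ U, pdv v (fun q => k (μ q, μt q)) q
      = pdv v μ q * pdv (1,0) k (μ q, μt q) + pdv v μt q * pdv (0,1) k (μ q, μt q) := by
    intro v q hq
    rw [pdv_comp hk (hμ.contDiffAt (hU.mem_nhds hq)) (hμt.contDiffAt (hU.mem_nhds hq)),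
      fderiv_decomp]
  have key2 : ∀ v w : ℝ × ℝ, pdv v (pdv w (fun q => k (μ q, μt q))) p =
      pdv v (pdv w μ) p * pdv (1,0) k (μ p, μt p)
      + pdv w μ p * (pdv v μ p * pdv (1,0) (pdv (1,0) k) (μ p, μt p)
          + pdv v μt p * pdv (0,1) (pdv (1,0) k) (μ p, μt p))
      + (pdv v (pdv w μt) p * pdv (0,1) k (μ p, μt p)
      + pdv w μt p * (pdv v μ p * pdv (1,0) (pdv (0,1) k) (μ p, μt p)
          + pdv v μt p * pdv (0,1) (pdv (0,1) k) (μ p, μt p))) := by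
    intro v w
    have hev : (pdv w (fun q => k (μ q, μt q))) =ᶠ[𝓝 p]
        (fun q => pdv w μ q * pdv (1,0) k (μ q, μt q)
          + pdv w μt q * pdv (0,1) k (μ q, μt q)) :=
      Filter.eventually_of_mem hUp (fun q hq => key1 w q hq)
    rw [pdv_congr hev v]
    have d1 : DifferentiableAt ℝ (pdv w μ) p := (contDiffAt_pdv hμp w).differentiableAt (by simp)
    have d2 : DifferentiableAt ℝ (pdv w μt) p := (contDiffAt_pdv hμtp w).differentiableAt (by simp)
    have dc : ∀ u : ℝ × ℝ, DifferentiableAt ℝ (fun q => pdv u k (μ q, μt q)) p :=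
      fun u => (((hKv u).contDiffAt).comp p (hμp.prodMk hμtp)).differentiableAt (by simp)
    rw [pdv_add (d1.fun_mul (dc (1,0))) (d2.fun_mul (dc (0,1))) v,
        pdv_mul d1 (dc (1,0)) v, pdv_mul d2 (dc (0,1)) v,
        pdv_comp (hKv (1,0)) hμp hμtp v, pdv_comp (hKv (0,1)) hμp hμtp v,
        fderiv_decomp, fderiv_decomp]
  have hevCR1 : (pdv (1,0) μ) =ᶠ[𝓝 p] (pdv (0,1) μt) :=
    Filter.eventually_of_mem hUp (fun q hq => hCR1 q hq)
  have hevCR2 : (pdv (1,0) μt) =ᶠ[𝓝 p] (fun q => -(pdv (0,1) μ q)) :=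
    Filter.eventually_of_mem hUp (fun q hq => by have := hCR2 q hq; simp only []; linarith)
  have lapμ : pdv (1,0) (pdv (1,0) μ) p + pdv (0,1) (pdv (0,1) μ) p = 0 := by
    have h1 : pdv (1,0) (pdv (1,0) μ) p = pdv (1,0) (pdv (0,1) μt) p := pdv_congr hevCR1 _
    have h2 := pdv_comm hμtp (1,0) (0,1)
    have h3 : pdv (0,1) (pdv (1,0) μt) p = pdv (0,1) (fun q => -(pdv (0,1) μ q)) p :=
      pdv_congr hevCR2 _
    have h4 : pdv (0,1) (fun q => -(pdv (0,1) μ q)) p = -(pdv (0,1) (pdv (0,1) μ) p) :=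
      pdv_neg _
    linarith
  have lapμt : pdv (1,0) (pdv (1,0) μt) p + pdv (0,1) (pdv (0,1) μt) p = 0 := by
    have h1 : pdv (1,0) (pdv (1,0) μt) p = pdv (1,0) (fun q => -(pdv (0,1) μ q)) p :=
      pdv_congr hevCR2 _
    have h1' : pdv (1,0) (fun q => -(pdv (0,1) μ q)) p = -(pdv (1,0) (pdv (0,1) μ) p) :=
      pdv_neg _
    have h2 := pdv_comm hμp (1,0) (0,1)
    have h3 : pdv (0,1) (pdv (1,0) μ) p = pdv (0,1) (pdv (0,1) μt) p := pdv_congr hevCR1 _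
    linarith
  have cr1p : pdv (1,0) μt p = -(pdv (0,1) μ p) := by have := hCR2 p hp; linarith
  have cr2p : pdv (0,1) μt p = pdv (1,0) μ p := (hCR1 p hp).symm
  rw [key2 (1,0) (1,0), key2 (0,1) (0,1), key1 (1,0) p hp, key1 (0,1) p hp, cr1p, cr2p]
  linear_combination ((pdv (1,0) μ p)^2 + (pdv (0,1) μ p)^2) * hkeq p hp
    + (μ p * pdv (1,0) k (μ p, μt p)) * lapμ
    + (μ p * pdv (0,1) k (μ p, μt p)) * lapμt
end
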